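/- In Example 1's graph, the coded store cs = x_{v_1},...,x_{v_{2N}}, x_a, x_{v_{2N+1}},...,x_{v_{4N}}, x_a ⊕ x_b, x_{v_{4N+1}},...,x_{v_{6N}}, x_b, x_{v_{6N+1}},...,x_{v_{8N}} of length 8N+3 recovers every edge of G from some contiguous interval of length at most 2N+2. Hence S^c_2(G, n+1) ≤ (2N+2)/2 = N+1. -/

import Mathlib

/-- Example 1's graph (as in the paper): vertices `v_1, …, v_{8N}` (indices
`0, …, 8N−1`), `a` (index `8N`) and `b` (index `8N+1`). -/
def exampleGraph (N : ℕ) : SimpleGraph (Fin (8 * N + 2)) :=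
  SimpleGraph.fromRel (fun u w =>
    (u.val + 1 = w.val ∧ w.val < 8 * N) ∨
    (u.val = 8 * N ∧ w.val < 6 * N) ∨
    (u.val = 8 * N + 1 ∧ 2 * N ≤ w.val ∧ w.val < 8 * N) ∨
    (u.val = 8 * N ∧ w.val = 8 * N + 1))

/-- The coded store
`x_{v_1},…,x_{v_{2N}}, x_a, x_{v_{2N+1}},…,x_{v_{4N}}, x_a ⊕ x_b,
 x_{v_{4N+1}},…,x_{v_{6N}}, x_b, x_{v_{6N+1}},…,x_{v_{8N}}`
of length `8N + 3` (chunks are standard basis vectors of `GF(2)^{8N+2}`). -/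
noncomputable def exStore (N : ℕ) (k : Fin (8 * N + 3)) : Fin (8 * N + 2) → ZMod 2 :=
  if h1 : k.val < 2 * N then Pi.single (⟨k.val, by omega⟩ : Fin (8 * N + 2)) 1
  else if h2 : k.val = 2 * N then Pi.single (⟨8 * N, by omega⟩ : Fin (8 * N + 2)) 1
  else if h3 : k.val ≤ 4 * N then Pi.single (⟨k.val - 1, by have := k.isLt; omega⟩ : Fin (8 * N + 2)) 1
  else if h4 : k.val = 4 * N + 1 then
    Pi.single (⟨8 * N, by omega⟩ : Fin (8 * N + 2)) 1 +
      Pi.single (⟨8 * N + 1, by omega⟩ : Fin (8 * N + 2)) 1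
  else if h5 : k.val ≤ 6 * N + 1 then Pi.single (⟨k.val - 2, by have := k.isLt; omega⟩ : Fin (8 * N + 2)) 1
  else if h6 : k.val = 6 * N + 2 then Pi.single (⟨8 * N + 1, by omega⟩ : Fin (8 * N + 2)) 1
  else Pi.single (⟨k.val - 3, by have := k.isLt; omega⟩ : Fin (8 * N + 2)) 1

/-- The edge `{u, w}` is recovered from the interval `[i, j]` of the coded
store `c`: both basis chunks lie in the span of the stored chunks there. -/
def edgeRecovered {n m : ℕ} (c : Fin m → (Fin n → ZMod 2)) (u w : Fin n)
    (i j : ℕ) : Prop :=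
  (Pi.single u 1 : Fin n → ZMod 2) ∈
    Submodule.span (ZMod 2) {y : Fin n → ZMod 2 | ∃ k : Fin m, i ≤ k.val ∧ k.val ≤ j ∧ y = c k} ∧
  (Pi.single w 1 : Fin n → ZMod 2) ∈
    Submodule.span (ZMod 2) {y : Fin n → ZMod 2 | ∃ k : Fin m, i ≤ k.val ∧ k.val ≤ j ∧ y = c k}

/-- The coded stretch metric for `t = 2` over linearly coded stores of length
`m` recovering every edge from some interval. -/
noncomputable def Sc2 {n : ℕ} (G : SimpleGraph (Fin n)) (m : ℕ) : ℝ :=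
  sInf {r : ℝ | ∃ c : Fin m → (Fin n → ZMod 2),
    (∀ u w : Fin n, G.Adj u w → ∃ i j : ℕ, i ≤ j ∧ j < m ∧ edgeRecovered c u w i j) ∧
    r = sSup {x : ℝ | ∃ u w : Fin n, G.Adj u w ∧
      x = ((sInf {ℓ : ℕ | ∃ i j : ℕ, i ≤ j ∧ j < m ∧ edgeRecovered c u w i j ∧
        ℓ = j - i + 1} : ℕ) : ℝ) / 2}}

/-!
In `exStore N` the plain chunks of consecutive path vertices are at most two positions apart,
so path edges are recovered from windows of length at most `3`. The hub `a` is available twice: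
as `x_a` at position `2N`, and as `(x_a ⊕ x_b) ⊕ x_b` from the window `[4N+1, 6N+2]`; dually `x_b`
is at position `6N+2` or is `x_a ⊕ (x_a ⊕ x_b)` from `[2N, 4N+1]`. Every neighbour `v_t` of `a`
(`t < 6N`) or of `b` (`t ≥ 2N`) lies in a window of length at most `2N + 2` together with one of
these.
-/

section WindowSpan

variable {K V : Type*} [Semiring K] [AddCommMonoid V] [Module K V] {m : ℕ}

variable (K) in
/-- `edgeRecovered c u w i j` unfolds to `Pi.single u 1` and `Pi.single w 1` lying in
`windowSpan (ZMod 2) c i j`. -/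
def windowSpan (c : Fin m → V) (i j : ℕ) : Submodule K V :=
  Submodule.span K {y : V | ∃ k : Fin m, i ≤ k.val ∧ k.val ≤ j ∧ y = c k}

theorem apply_mem_windowSpan (c : Fin m → V) {i j : ℕ} (k : Fin m) (hi : i ≤ k.val)
    (hj : k.val ≤ j) : c k ∈ windowSpan K c i j :=
  Submodule.subset_span ⟨k, hi, hj, rfl⟩

end WindowSpan

section Recoverable

variable {n m : ℕ}

def RecoverableWithin (c : Fin m → Fin n → ZMod 2) (L : ℕ) (u w : Fin n) : Prop :=
  ∃ i j : ℕ, i ≤ j ∧ j < m ∧ j - i + 1 ≤ L ∧ edgeRecovered c u w i j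

theorem RecoverableWithin.symm {c : Fin m → Fin n → ZMod 2} {L : ℕ} {u w : Fin n}
    (h : RecoverableWithin c L u w) : RecoverableWithin c L w u :=
  let ⟨i, j, hij, hj, hL, hu, hw⟩ := h
  ⟨i, j, hij, hj, hL, hw, hu⟩

theorem Sc2_le_of_forall_adj_recoverableWithin (G : SimpleGraph (Fin n))
    (c : Fin m → Fin n → ZMod 2) (L : ℕ)
    (hc : ∀ u w, G.Adj u w → RecoverableWithin c L u w) : Sc2 G m ≤ (L : ℝ) / 2 := by
  have hrec : ∀ u w, G.Adj u w → ∃ i j : ℕ, i ≤ j ∧ j < m ∧ edgeRecovered c u w i j :=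
    fun u w h => let ⟨i, j, hij, hj, _, hr⟩ := hc u w h; ⟨i, j, hij, hj, hr⟩
  unfold Sc2
  refine le_trans (csInf_le ?_ ⟨c, hrec, rfl⟩) (Real.sSup_le ?_ (by positivity))
  · refine ⟨0, ?_⟩
    rintro r ⟨c, -, rfl⟩
    exact Real.sSup_nonneg (by rintro x ⟨u, w, -, rfl⟩; positivity)
  rintro x ⟨u, w, hadj, rfl⟩
  obtain ⟨i, j, hij, hj, hL, hr⟩ := hc u w hadj
  have hmin : sInf {ℓ : ℕ | ∃ i j : ℕ, i ≤ j ∧ j < m ∧ edgeRecovered c u w i j ∧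
      ℓ = j - i + 1} ≤ L := by
    refine (Nat.sInf_le ?_).trans hL
    exact ⟨i, j, hij, hj, hr, rfl⟩
  gcongr

end Recoverable

section ExampleStore

variable {N : ℕ}

/-- The position of `x_{v_{t+1}}` in `exStore N`; the coded chunks `x_a`, `x_a ⊕ x_b`, `x_b` sit at
positions `2N`, `4N + 1`, `6N + 2`. -/
def vertexPos (N t : ℕ) : ℕ :=
  if t < 2 * N then t else if t < 4 * N then t + 1 else if t < 6 * N then t + 2 else t + 3

theorem vertexPos_cases (N t : ℕ) :
    t < 2 * N ∧ vertexPos N t = t ∨ 2 * N ≤ t ∧ t < 4 * N ∧ vertexPos N t = t + 1 ∨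
      4 * N ≤ t ∧ t < 6 * N ∧ vertexPos N t = t + 2 ∨ 6 * N ≤ t ∧ vertexPos N t = t + 3 := by
  unfold vertexPos
  split_ifs <;> omega

theorem exStore_eq_single_vertex {k : Fin (8 * N + 3)} {v : Fin (8 * N + 2)} (hv : v.val < 8 * N)
    (hk : k.val = vertexPos N v) : exStore N k = Pi.single v 1 := by
  have := vertexPos_cases N v
  unfold exStore
  split_ifs <;> first | omega | (congr 1; ext; simp only; omega)

theorem exStore_eq_single_a {k : Fin (8 * N + 3)} {a : Fin (8 * N + 2)} (ha : a.val = 8 * N)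
    (hk : k.val = 2 * N) : exStore N k = Pi.single a 1 := by
  unfold exStore
  split_ifs <;> first | omega | (congr 1; ext; simp only; omega)

theorem exStore_eq_single_add {k : Fin (8 * N + 3)} {a b : Fin (8 * N + 2)} (ha : a.val = 8 * N)
    (hb : b.val = 8 * N + 1) (hk : k.val = 4 * N + 1) :
    exStore N k = Pi.single a 1 + Pi.single b 1 := by
  unfold exStore
  split_ifs <;> first | omega | (congr 2 <;> ext <;> simp only <;> omega)

theorem exStore_eq_single_b {k : Fin (8 * N + 3)} {b : Fin (8 * N + 2)} (hb : b.val = 8 * N + 1)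
    (hk : k.val = 6 * N + 2) : exStore N k = Pi.single b 1 := by
  unfold exStore
  split_ifs <;> first | omega | (congr 1; ext; simp only; omega)

variable {i j : ℕ}

theorem single_vertex_mem_windowSpan {v : Fin (8 * N + 2)} (hv : v.val < 8 * N)
    (hi : i ≤ vertexPos N v) (hj : vertexPos N v ≤ j) :
    Pi.single v 1 ∈ windowSpan (ZMod 2) (exStore N) i j := by
  have hk : vertexPos N v < 8 * N + 3 := by have := vertexPos_cases N v; omega
  rw [← exStore_eq_single_vertex (k := ⟨_, hk⟩) hv rfl]
  exact apply_mem_windowSpan _ _ hi hj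

theorem single_a_mem_windowSpan {a : Fin (8 * N + 2)} (ha : a.val = 8 * N)
    (hi : i ≤ 2 * N) (hj : 2 * N ≤ j) : Pi.single a 1 ∈ windowSpan (ZMod 2) (exStore N) i j := by
  rw [← exStore_eq_single_a (k := ⟨2 * N, by omega⟩) ha rfl]
  exact apply_mem_windowSpan _ _ hi hj

theorem single_b_mem_windowSpan {b : Fin (8 * N + 2)} (hb : b.val = 8 * N + 1)
    (hi : i ≤ 6 * N + 2) (hj : 6 * N + 2 ≤ j) :
    Pi.single b 1 ∈ windowSpan (ZMod 2) (exStore N) i j := by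
  rw [← exStore_eq_single_b (k := ⟨6 * N + 2, by omega⟩) hb rfl]
  exact apply_mem_windowSpan _ _ hi hj

theorem single_add_mem_windowSpan {a b : Fin (8 * N + 2)} (ha : a.val = 8 * N)
    (hb : b.val = 8 * N + 1) (hi : i ≤ 4 * N + 1) (hj : 4 * N + 1 ≤ j) :
    Pi.single a 1 + Pi.single b 1 ∈ windowSpan (ZMod 2) (exStore N) i j := by
  rw [← exStore_eq_single_add (k := ⟨4 * N + 1, by omega⟩) ha hb rfl]
  exact apply_mem_windowSpan _ _ hi hj

theorem single_a_mem_windowSpan_of_coded {a : Fin (8 * N + 2)} (ha : a.val = 8 * N)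
    (hi : i ≤ 4 * N + 1) (hj : 6 * N + 2 ≤ j) :
    Pi.single a 1 ∈ windowSpan (ZMod 2) (exStore N) i j := by
  let b : Fin (8 * N + 2) := ⟨8 * N + 1, by omega⟩
  have hb : Pi.single b 1 ∈ windowSpan (ZMod 2) (exStore N) i j :=
    single_b_mem_windowSpan rfl (by omega) hj
  exact (Submodule.add_mem_iff_left _ hb).mp
    (single_add_mem_windowSpan ha rfl hi (by omega))

theorem single_b_mem_windowSpan_of_coded {b : Fin (8 * N + 2)} (hb : b.val = 8 * N + 1)
    (hi : i ≤ 2 * N) (hj : 4 * N + 1 ≤ j) :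
    Pi.single b 1 ∈ windowSpan (ZMod 2) (exStore N) i j := by
  let a : Fin (8 * N + 2) := ⟨8 * N, by omega⟩
  have ha : Pi.single a 1 ∈ windowSpan (ZMod 2) (exStore N) i j :=
    single_a_mem_windowSpan rfl hi (by omega)
  exact (Submodule.add_mem_iff_right _ ha).mp
    (single_add_mem_windowSpan rfl hb (by omega) hj)

variable {u w : Fin (8 * N + 2)}

theorem exStore_recoverableWithin_path (huw : u.val + 1 = w.val) (hw : w.val < 8 * N) :
    RecoverableWithin (exStore N) (2 * N + 2) u w := by
  have hu := vertexPos_cases N u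
  have hw' := vertexPos_cases N w
  exact ⟨vertexPos N u, vertexPos N w, by omega, by omega, by omega,
    single_vertex_mem_windowSpan (by omega) le_rfl (by omega),
    single_vertex_mem_windowSpan hw (by omega) le_rfl⟩

theorem exStore_recoverableWithin_a_vertex (hu : u.val = 8 * N) (hw : w.val < 6 * N) :
    RecoverableWithin (exStore N) (2 * N + 2) u w := by
  rcases vertexPos_cases N w with ⟨hw₁, hp⟩ | ⟨hw₁, hw₂, hp⟩ | ⟨hw₁, hw₂, hp⟩ | ⟨hw₁, hp⟩
  · exact ⟨w, 2 * N, by omega, by omega, by omega,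
      single_a_mem_windowSpan hu (by omega) le_rfl,
      single_vertex_mem_windowSpan (by omega) (by omega) (by omega)⟩
  · exact ⟨2 * N, w + 1, by omega, by omega, by omega,
      single_a_mem_windowSpan hu le_rfl (by omega),
      single_vertex_mem_windowSpan (by omega) (by omega) (by omega)⟩
  · exact ⟨4 * N + 1, 6 * N + 2, by omega, by omega, by omega,
      single_a_mem_windowSpan_of_coded hu le_rfl le_rfl,
      single_vertex_mem_windowSpan (by omega) (by omega) (by omega)⟩
  · omega

theorem exStore_recoverableWithin_b_vertex (hu : u.val = 8 * N + 1) (hw₁ : 2 * N ≤ w.val)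
    (hw₂ : w.val < 8 * N) :
    RecoverableWithin (exStore N) (2 * N + 2) u w := by
  rcases vertexPos_cases N w with ⟨hw₃, hp⟩ | ⟨hw₃, hw₄, hp⟩ | ⟨hw₃, hw₄, hp⟩ | ⟨hw₃, hp⟩
  · omega
  · exact ⟨2 * N, 4 * N + 1, by omega, by omega, by omega,
      single_b_mem_windowSpan_of_coded hu le_rfl le_rfl,
      single_vertex_mem_windowSpan hw₂ (by omega) (by omega)⟩
  · exact ⟨w + 2, 6 * N + 2, by omega, by omega, by omega,
      single_b_mem_windowSpan hu (by omega) le_rfl,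
      single_vertex_mem_windowSpan hw₂ (by omega) (by omega)⟩
  · exact ⟨6 * N + 2, w + 3, by omega, by omega, by omega,
      single_b_mem_windowSpan hu le_rfl (by omega),
      single_vertex_mem_windowSpan hw₂ (by omega) (by omega)⟩

theorem exStore_recoverableWithin_a_b (hu : u.val = 8 * N) (hw : w.val = 8 * N + 1) :
    RecoverableWithin (exStore N) (2 * N + 2) u w :=
  ⟨2 * N, 4 * N + 1, by omega, by omega, by omega,
    single_a_mem_windowSpan hu le_rfl (by omega),
    single_b_mem_windowSpan_of_coded hw le_rfl le_rfl⟩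

theorem exStore_recoverableWithin_of_adj (h : (exampleGraph N).Adj u w) :
    RecoverableWithin (exStore N) (2 * N + 2) u w := by
  have of_rel {u w : Fin (8 * N + 2)} (hr : (u.val + 1 = w.val ∧ w.val < 8 * N) ∨
      (u.val = 8 * N ∧ w.val < 6 * N) ∨ (u.val = 8 * N + 1 ∧ 2 * N ≤ w.val ∧ w.val < 8 * N) ∨
      (u.val = 8 * N ∧ w.val = 8 * N + 1)) : RecoverableWithin (exStore N) (2 * N + 2) u w := by
    rcases hr with ⟨h₁, h₂⟩ | ⟨h₁, h₂⟩ | ⟨h₁, h₂, h₃⟩ | ⟨h₁, h₂⟩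
    · exact exStore_recoverableWithin_path h₁ h₂
    · exact exStore_recoverableWithin_a_vertex h₁ h₂
    · exact exStore_recoverableWithin_b_vertex h₁ h₂ h₃
    · exact exStore_recoverableWithin_a_b h₁ h₂
  rw [exampleGraph, SimpleGraph.fromRel_adj] at h
  rcases h.2 with hr | hr
  · exact of_rel hr
  · exact (of_rel hr).symm

end ExampleStore

theorem example1_coded_upper_bound_general {N : ℕ} :
    (∀ u w : Fin (8 * N + 2), (exampleGraph N).Adj u w →
      ∃ i j : ℕ, i ≤ j ∧ j < 8 * N + 3 ∧ j - i + 1 ≤ 2 * N + 2 ∧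
        edgeRecovered (exStore N) u w i j) ∧
    Sc2 (exampleGraph N) (8 * N + 3) ≤ (N : ℝ) + 1 := by
  have hrec : ∀ u w, (exampleGraph N).Adj u w → RecoverableWithin (exStore N) (2 * N + 2) u w :=
    fun _ _ => exStore_recoverableWithin_of_adj
  refine ⟨hrec, ?_⟩
  calc Sc2 (exampleGraph N) (8 * N + 3) ≤ ((2 * N + 2 : ℕ) : ℝ) / 2 :=
        Sc2_le_of_forall_adj_recoverableWithin _ _ _ hrec
    _ = N + 1 := by push_cast; ring

/-- In Example 1's graph, the explicit coded store `exStore N` of length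
`8N + 3` recovers every edge from a contiguous interval of length at most
`2N + 2`; hence `S^c_2(G, n+1) ≤ (2N+2)/2 = N + 1`. -/
theorem example1_coded_upper_bound {N : ℕ} (hN : 1 ≤ N) :
    (∀ u w : Fin (8 * N + 2), (exampleGraph N).Adj u w →
      ∃ i j : ℕ, i ≤ j ∧ j < 8 * N + 3 ∧ j - i + 1 ≤ 2 * N + 2 ∧
        edgeRecovered (exStore N) u w i j) ∧
    Sc2 (exampleGraph N) (8 * N + 3) ≤ (N : ℝ) + 1 :=
  example1_coded_upper_bound_general
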